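/- Let L ⊣ R : D ⇄ C and L' ⊣ R' : C ⇄ B be adjunctions between cartesian categories. If both adjunctions satisfy Frobenius reciprocity, then the composite adjunction L'L ⊣ RR' : D ⇄ B satisfies Frobenius reciprocity. If both adjunctions are stably Frobenius, then the composite adjunction is stably Frobenius. -/

import Mathlib

open CategoryTheory CategoryTheory.Limits

universe v u v₂ u₂ v₃ u₃

noncomputable section

namespace PrincipalBundles

attribute [local simp] prod.lift_fst prod.lift_snd prod.lift_fst_assoc prod.lift_snd_assoc

variable {C : Type u} [Category.{v} C] [HasFiniteLimits C]

/-- An internal group in a cartesian category `C`: an object `G` with multiplication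
`m : G ⨯ G ⟶ G`, unit `e : 1 ⟶ G` and inverse `i : G ⟶ G` satisfying the group axioms. -/
structure InternalGroup (C : Type u) [Category.{v} C] [HasFiniteLimits C] where
  G : C
  m : G ⨯ G ⟶ G
  e : ⊤_ C ⟶ G
  i : G ⟶ G
  mul_assoc' : (prod.associator G G G).inv ≫ prod.map m (𝟙 G) ≫ m = prod.map (𝟙 G) m ≫ m
  one_mul' : prod.lift (terminal.from G ≫ e) (𝟙 G) ≫ m = 𝟙 G
  mul_one' : prod.lift (𝟙 G) (terminal.from G ≫ e) ≫ m = 𝟙 G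
  inv_mul' : prod.lift i (𝟙 G) ≫ m = terminal.from G ≫ e
  mul_inv' : prod.lift (𝟙 G) i ≫ m = terminal.from G ≫ e

namespace InternalGroup

variable (Gr : InternalGroup C)

/-- Multiplication of generalized elements. -/
theorem one_mul_elt {T : C} (b : T ⟶ Gr.G) :
    prod.lift (terminal.from T ≫ Gr.e) b ≫ Gr.m = b := by
  have h : prod.lift (terminal.from T ≫ Gr.e) b
      = b ≫ prod.lift (terminal.from Gr.G ≫ Gr.e) (𝟙 Gr.G) := by
    rw [prod.comp_lift, ← Category.assoc, terminal.comp_from, Category.comp_id]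
  rw [h, Category.assoc, Gr.one_mul', Category.comp_id]

theorem mul_one_elt {T : C} (a : T ⟶ Gr.G) :
    prod.lift a (terminal.from T ≫ Gr.e) ≫ Gr.m = a := by
  have h : prod.lift a (terminal.from T ≫ Gr.e)
      = a ≫ prod.lift (𝟙 Gr.G) (terminal.from Gr.G ≫ Gr.e) := by
    rw [prod.comp_lift, ← Category.assoc, terminal.comp_from, Category.comp_id]
  rw [h, Category.assoc, Gr.mul_one', Category.comp_id]

theorem mul_assoc_elt {T : C} (a b c : T ⟶ Gr.G) :
    prod.lift (prod.lift a b ≫ Gr.m) c ≫ Gr.m = prod.lift a (prod.lift b c ≫ Gr.m) ≫ Gr.m := by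
  have h1 : prod.lift (prod.lift a b ≫ Gr.m) c
      = prod.lift (prod.lift a b) c ≫ prod.map Gr.m (𝟙 _) := by simp
  have h2 : prod.lift (prod.lift a b) c
      = prod.lift a (prod.lift b c) ≫ (prod.associator Gr.G Gr.G Gr.G).inv := by
    ext <;> simp
  have h3 : prod.lift a (prod.lift b c ≫ Gr.m)
      = prod.lift a (prod.lift b c) ≫ prod.map (𝟙 _) Gr.m := by simp
  rw [h1, h2, h3, Category.assoc, Category.assoc, Gr.mul_assoc', ← Category.assoc]

theorem inv_mul_elt {T : C} (a : T ⟶ Gr.G) :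
    prod.lift (a ≫ Gr.i) a ≫ Gr.m = terminal.from T ≫ Gr.e := by
  have h : prod.lift (a ≫ Gr.i) a = a ≫ prod.lift Gr.i (𝟙 Gr.G) := by
    rw [prod.comp_lift, Category.comp_id]
  rw [h, Category.assoc, Gr.inv_mul', ← Category.assoc, terminal.comp_from]

theorem mul_inv_elt {T : C} (a : T ⟶ Gr.G) :
    prod.lift a (a ≫ Gr.i) ≫ Gr.m = terminal.from T ≫ Gr.e := by
  have h : prod.lift a (a ≫ Gr.i) = a ≫ prod.lift (𝟙 Gr.G) Gr.i := by
    rw [prod.comp_lift, Category.comp_id]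
  rw [h, Category.assoc, Gr.mul_inv', ← Category.assoc, terminal.comp_from]

/-- The monad `X ↦ G ⨯ X` on `C` associated to an internal group `G`; its unit at `X` is
`(e ∘ !, id) : X ⟶ G ⨯ X` and its multiplication at `X` is `m ⨯ id : G ⨯ (G ⨯ X) ⟶ G ⨯ X`. -/
def actionMonad : Monad C where
  toFunctor := prod.functor.obj Gr.G
  η :=
    { app := fun X => prod.lift (terminal.from X ≫ Gr.e) (𝟙 X)
      naturality := by
        intro X Y f
        dsimp [prod.functor]
        ext
        · simp [← Category.assoc, terminal.comp_from]
        · simp }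
  μ :=
    { app := fun X => (prod.associator Gr.G Gr.G X).inv ≫ prod.map Gr.m (𝟙 X)
      naturality := by
        intro X Y f
        dsimp [prod.functor]
        ext
        · simp [prod.comp_lift_assoc]
        · simp }
  assoc := by
    intro X
    dsimp [prod.functor]
    ext
    · simp only [prod.comp_lift_assoc, Category.assoc, prod.map_fst, prod.map_snd,
        prod.lift_fst, prod.lift_snd, Category.comp_id, Category.id_comp,
        prod.associator_inv, prod.lift_fst_assoc, prod.comp_lift, prod.map_fst_assoc,
        prod.map_snd_assoc, prod.lift_snd_assoc]
      exact (Gr.mul_assoc_elt _ _ _).symm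
    · simp
  left_unit := by
    intro X
    dsimp [prod.functor]
    ext
    · simp [prod.comp_lift_assoc, Gr.one_mul_elt]
    · simp
  right_unit := by
    intro X
    dsimp [prod.functor]
    ext
    · simp only [prod.comp_lift_assoc, Category.assoc, prod.map_fst, prod.map_snd,
        prod.lift_fst, prod.lift_snd, Category.comp_id, Category.id_comp,
        prod.associator_inv, prod.lift_fst_assoc]
      simp only [prod.map_snd_assoc, prod.lift_fst_assoc, Category.assoc, prod.lift_fst]
      rw [← Category.assoc prod.snd, terminal.comp_from]
      exact Gr.mul_one_elt prod.fst
    · simp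

/-- The category `[G, C]` of `G`-objects and `G`-homomorphisms: objects of `C` equipped with
a `G`-action `a : G ⨯ A ⟶ A` satisfying the unit and associativity laws, with morphisms the
morphisms of `C` commuting with the actions.  (Implemented as the Eilenberg–Moore category of
the monad `G ⨯ (-)`; the algebra axioms are literally the action axioms, and algebra morphisms
are literally the `G`-homomorphisms.) -/
abbrev GObject := (actionMonad Gr).Algebra

instance : HasFiniteLimits (GObject Gr) :=
  ⟨fun _ _ _ => ⟨fun D => Monad.hasLimit_of_comp_forget_hasLimit D⟩⟩

variable {Gr}

/-- The action of a `G`-object, seen as a morphism `G ⨯ A ⟶ A` in `C`. -/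
def act (A : GObject Gr) : Gr.G ⨯ A.A ⟶ A.A := A.a

/-- Elementwise unit law for an action. -/
theorem act_one_elt (A : GObject Gr) {T : C} (y : T ⟶ A.A) :
    prod.lift (terminal.from T ≫ Gr.e) y ≫ act A = y := by
  have h : prod.lift (terminal.from T ≫ Gr.e) y
      = y ≫ prod.lift (terminal.from A.A ≫ Gr.e) (𝟙 A.A) := by
    rw [prod.comp_lift, ← Category.assoc, terminal.comp_from, Category.comp_id]
  have hu := A.unit
  dsimp [actionMonad] at hu
  rw [h, Category.assoc, act]
  erw [hu]
  rw [Category.comp_id]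

/-- Elementwise associativity law for an action. -/
theorem act_assoc_elt (A : GObject Gr) {T : C} (a b : T ⟶ Gr.G) (y : T ⟶ A.A) :
    prod.lift (prod.lift a b ≫ Gr.m) y ≫ act A
      = prod.lift a (prod.lift b y ≫ act A) ≫ act A := by
  have ha : (prod.associator Gr.G Gr.G A.A).inv ≫ prod.map Gr.m (𝟙 A.A) ≫ A.a
      = prod.map (𝟙 Gr.G) A.a ≫ A.a := by
    have ha0 := A.assoc
    dsimp [actionMonad, prod.functor] at ha0
    rw [prod.associator_inv]
    erw [prod.lift_map_assoc]
    simp [Category.assoc] at ha0 ⊢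
    exact ha0
  have h1 : prod.lift (prod.lift a b ≫ Gr.m) y
      = prod.lift (prod.lift a b) y ≫ prod.map Gr.m (𝟙 _) := by simp
  have h2 : prod.lift (prod.lift a b) y
      = prod.lift a (prod.lift b y) ≫ (prod.associator Gr.G Gr.G A.A).inv := by
    ext <;> simp
  have h3 : prod.lift a (prod.lift b y ≫ act A)
      = prod.lift a (prod.lift b y) ≫ prod.map (𝟙 _) (act A) := by simp
  rw [h1, h2, h3, Category.assoc, Category.assoc, act, ha]
  exact (Category.assoc _ _ _).symm

variable (Gr)

/-- The functor `G* : C ⥤ [G, C]` equipping an object with the trivial action `π₂`. -/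
def trivAction : C ⥤ GObject Gr where
  obj X :=
    { A := X
      a := prod.snd
      unit := by simp [actionMonad]; exact prod.lift_snd _ _
      assoc := by simp [actionMonad, prod.functor] }
  map f :=
    { f := f
      h := by simp [actionMonad, prod.functor] }
  map_id X := by ext; rfl
  map_comp f g := by ext; rfl

/-- The `G`-object `(G, m)`: `G` acting on itself by multiplication. -/
def selfAction : GObject Gr where
  A := Gr.G
  a := Gr.m
  unit := Gr.one_mul'
  assoc := by
    have h := Gr.mul_assoc'
    dsimp [actionMonad, prod.functor]
    simpa [Category.assoc] using h

/-- The product of two `G`-objects: the product in `C` with the componentwise action. -/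
def prodGObject (A B : GObject Gr) : GObject Gr where
  A := A.A ⨯ B.A
  a := prod.lift (prod.map (𝟙 Gr.G) prod.fst ≫ act A) (prod.map (𝟙 Gr.G) prod.snd ≫ act B)
  unit := by
    dsimp [actionMonad, prod.functor]
    apply Limits.prod.hom_ext
    · simp only [Category.assoc, prod.lift_fst, prod.lift_map_assoc, Category.comp_id,
        Category.id_comp]
      exact act_one_elt A prod.fst
    · simp only [Category.assoc, prod.lift_snd, prod.lift_map_assoc, Category.comp_id,
        Category.id_comp]
      exact act_one_elt B prod.snd
  assoc := by
    dsimp [actionMonad, prod.functor]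
    apply Limits.prod.hom_ext
    · simp only [prod.comp_lift_assoc, Category.assoc, prod.map_fst, prod.map_snd,
        prod.lift_fst, prod.lift_snd, Category.comp_id, Category.id_comp,
        prod.associator_inv, prod.lift_fst_assoc, prod.comp_lift, prod.map_fst_assoc,
        prod.map_snd_assoc, prod.lift_snd_assoc, prod.map_map_assoc, prod.map_map]
      rw [prod.lift_map_assoc]
      have hR : prod.map (𝟙 Gr.G) (prod.map (𝟙 Gr.G) (prod.fst : A.A ⨯ B.A ⟶ A.A) ≫ act A) ≫
              act A
          = prod.lift (prod.fst : Gr.G ⨯ (Gr.G ⨯ (A.A ⨯ B.A)) ⟶ Gr.G)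
              (prod.lift ((prod.snd : Gr.G ⨯ (Gr.G ⨯ (A.A ⨯ B.A)) ⟶ Gr.G ⨯ (A.A ⨯ B.A)) ≫
                  prod.fst)
                ((prod.snd ≫ prod.snd) ≫ prod.fst) ≫ act A) ≫
            act A := by
        congr 1
        apply Limits.prod.hom_ext
        · simp
        · simp only [prod.map_snd, prod.lift_snd]
          rw [← Category.assoc]
          congr 1
          apply Limits.prod.hom_ext <;> simp
      rw [hR]
      exact act_assoc_elt A prod.fst (prod.snd ≫ prod.fst) ((prod.snd ≫ prod.snd) ≫ prod.fst)
    · simp only [prod.comp_lift_assoc, Category.assoc, prod.map_fst, prod.map_snd,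
        prod.lift_fst, prod.lift_snd, Category.comp_id, Category.id_comp,
        prod.associator_inv, prod.lift_fst_assoc, prod.comp_lift, prod.map_fst_assoc,
        prod.map_snd_assoc, prod.lift_snd_assoc, prod.map_map_assoc, prod.map_map]
      rw [prod.lift_map_assoc]
      have hR : prod.map (𝟙 Gr.G) (prod.map (𝟙 Gr.G) (prod.snd : A.A ⨯ B.A ⟶ B.A) ≫ act B) ≫
              act B
          = prod.lift (prod.fst : Gr.G ⨯ (Gr.G ⨯ (A.A ⨯ B.A)) ⟶ Gr.G)
              (prod.lift ((prod.snd : Gr.G ⨯ (Gr.G ⨯ (A.A ⨯ B.A)) ⟶ Gr.G ⨯ (A.A ⨯ B.A)) ≫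
                  prod.fst)
                ((prod.snd ≫ prod.snd) ≫ prod.snd) ≫ act B) ≫
            act B := by
        congr 1
        apply Limits.prod.hom_ext
        · simp
        · simp only [prod.map_snd, prod.lift_snd]
          rw [← Category.assoc]
          congr 1
          apply Limits.prod.hom_ext <;> simp
      rw [hR]
      exact act_assoc_elt B prod.fst (prod.snd ≫ prod.fst) ((prod.snd ≫ prod.snd) ≫ prod.snd)

variable {Gr}

/-- First projection of the product of `G`-objects. -/
def prodGFst (A B : GObject Gr) : prodGObject Gr A B ⟶ A where
  f := prod.fst
  h := by simp [prodGObject, actionMonad, prod.functor, act]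

/-- Second projection of the product of `G`-objects. -/
def prodGSnd (A B : GObject Gr) : prodGObject Gr A B ⟶ B where
  f := prod.snd
  h := by simp [prodGObject, actionMonad, prod.functor, act]

/-- Functoriality of the product of `G`-objects. -/
def prodGHom {A A' B B' : GObject Gr} (u : A ⟶ A') (v : B ⟶ B') :
    prodGObject Gr A B ⟶ prodGObject Gr A' B' where
  f := prod.map u.f v.f
  h := by
    have hu : prod.map (𝟙 Gr.G) u.f ≫ act A' = act A ≫ u.f := by
      have h0 := u.h; dsimp [actionMonad, prod.functor] at h0; exact h0
    have hv : prod.map (𝟙 Gr.G) v.f ≫ act B' = act B ≫ v.f := by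
      have h0 := v.h; dsimp [actionMonad, prod.functor] at h0; exact h0
    dsimp [prodGObject, actionMonad, prod.functor]
    apply Limits.prod.hom_ext
    · simp only [Category.assoc, prod.lift_fst, prod.map_fst, prod.lift_fst_assoc]
      rw [← Category.assoc, prod.map_map, Category.id_comp, prod.map_fst]
      rw [show prod.map (𝟙 Gr.G) (prod.fst ≫ u.f)
            = prod.map (𝟙 Gr.G) prod.fst ≫ prod.map (𝟙 Gr.G) u.f by
          rw [prod.map_map, Category.comp_id]]
      rw [Category.assoc, hu]
    · simp only [Category.assoc, prod.lift_snd, prod.map_snd, prod.lift_snd_assoc]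
      rw [← Category.assoc, prod.map_map, Category.id_comp, prod.map_snd]
      rw [show prod.map (𝟙 Gr.G) (prod.snd ≫ v.f)
            = prod.map (𝟙 Gr.G) prod.snd ≫ prod.map (𝟙 Gr.G) v.f by
          rw [prod.map_map, Category.comp_id]]
      rw [Category.assoc, hv]

variable (Gr)

/-- The functor `(P, p) ⨯ (-) : [G, C] ⥤ [G, C]`. -/
def prodGFunctor (P : GObject Gr) : GObject Gr ⥤ GObject Gr where
  obj A := prodGObject Gr P A
  map h := prodGHom (𝟙 P) h
  map_id A := by
    apply Monad.Algebra.Hom.ext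
    show prod.map (𝟙 P : P ⟶ P).f (𝟙 A : A ⟶ A).f = (𝟙 (prodGObject Gr P A) : _ ⟶ _).f
    rw [Monad.Algebra.id_f, Monad.Algebra.id_f, Monad.Algebra.id_f, prod.map_id_id]
    rfl
  map_comp f g := by
    apply Monad.Algebra.Hom.ext
    show prod.map (𝟙 P : P ⟶ P).f (f ≫ g).f = (prodGHom (𝟙 P) f ≫ prodGHom (𝟙 P) g).f
    rw [Monad.Algebra.comp_f, Monad.Algebra.comp_f]
    show prod.map (𝟙 P : P ⟶ P).f (f.f ≫ g.f)
        = prod.map (𝟙 P : P ⟶ P).f f.f ≫ prod.map (𝟙 P : P ⟶ P).f g.f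
    rw [prod.map_map]
    rw [Monad.Algebra.id_f, Category.comp_id]

end InternalGroup

open InternalGroup

section Frobenius

variable {D : Type u₂} [Category.{v₂} D] [HasFiniteLimits D]
variable {E : Type u₃} [Category.{v₃} E] [HasFiniteLimits E]

/-- The canonical Frobenius map `L(R X ⨯ W) ⟶ X ⨯ L W` of an adjunction `L ⊣ R`, namely
`(L π₁, L π₂)` followed by `ε_X ⨯ id` where `ε` is the counit. -/
def frobMap {L : D ⥤ E} {R : E ⥤ D} (adj : L ⊣ R) (W : D) (X : E) :
    L.obj (R.obj X ⨯ W) ⟶ X ⨯ L.obj W :=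
  prod.lift (L.map prod.fst ≫ adj.counit.app X) (L.map prod.snd)

/-- An adjunction `L ⊣ R` between cartesian categories satisfies Frobenius reciprocity if
all the canonical maps `L(R X ⨯ W) ⟶ X ⨯ L W` are isomorphisms. -/
def IsFrobenius {L : D ⥤ E} {R : E ⥤ D} (adj : L ⊣ R) : Prop :=
  ∀ (W : D) (X : E), IsIso (frobMap adj W X)

/-- The left adjoint of the adjunction `L ⊣ R` sliced at `X`, sending `g : W ⟶ R X`
to its adjoint transpose `L W ⟶ X`. -/
def slicedL {L : D ⥤ E} {R : E ⥤ D} (adj : L ⊣ R) (X : E) : Over (R.obj X) ⥤ Over X where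
  obj W := Over.mk (L.map W.hom ≫ adj.counit.app X)
  map {W W'} u :=
    Over.homMk (L.map u.left) (by
      dsimp
      rw [← Category.assoc, ← L.map_comp, Over.w u])
  map_id W := by ext; dsimp; simp
  map_comp f g := by ext; dsimp; simp

/-- The right adjoint of the adjunction `L ⊣ R` sliced at `X`, sending `f : Y ⟶ X` to
`R f : R Y ⟶ R X`. -/
def slicedR {L : D ⥤ E} {R : E ⥤ D} (adj : L ⊣ R) (X : E) : Over X ⥤ Over (R.obj X) where
  obj Y := Over.mk (R.map Y.hom)
  map {Y Y'} u :=
    Over.homMk (R.map u.left) (by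
      dsimp
      rw [← R.map_comp, Over.w u])
  map_id Y := by ext; dsimp; simp
  map_comp f g := by ext; dsimp; simp

/-- The sliced adjunction `L_X ⊣ R_X : D / R X ⇄ E / X` of `L ⊣ R` at an object `X`. -/
def slicedAdj {L : D ⥤ E} {R : E ⥤ D} (adj : L ⊣ R) (X : E) : slicedL adj X ⊣ slicedR adj X :=
  Adjunction.mkOfHomEquiv
    { homEquiv := fun W Y =>
        { toFun := fun u => Over.homMk ((adj.homEquiv _ _) u.left) (by
            have hu := Over.w u
            dsimp [slicedL] at hu
            dsimp [slicedR]
            erw [Adjunction.homEquiv_unit, Category.assoc, ← R.map_comp, hu]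
            rw [R.map_comp,
              adj.unit_naturality_assoc, adj.right_triangle_components, Category.comp_id])
          invFun := fun v => Over.homMk ((adj.homEquiv _ _).symm v.left) (by
            have hv := Over.w v
            dsimp [slicedR] at hv
            dsimp [slicedL]
            erw [Adjunction.homEquiv_counit, Category.assoc, ← adj.counit_naturality,
              ← Category.assoc, ← L.map_comp, hv])
          left_inv := fun u => by ext; exact (adj.homEquiv _ _).symm_apply_apply _
          right_inv := fun v => by ext; exact (adj.homEquiv _ _).apply_symm_apply _ }
      homEquiv_naturality_left_symm := by
        intro W' W Y f g
        ext
        dsimp [slicedL]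
        exact adj.homEquiv_naturality_left_symm _ _
      homEquiv_naturality_right := by
        intro W Y Y' f g
        ext
        dsimp [slicedR]
        exact adj.homEquiv_naturality_right _ _ }

/-- An adjunction between cartesian categories is stably Frobenius if every sliced
adjunction satisfies Frobenius reciprocity. -/
def IsStablyFrobenius {L : D ⥤ E} {R : E ⥤ D} (adj : L ⊣ R) : Prop :=
  ∀ X : E, IsFrobenius (slicedAdj adj X)

end Frobenius

/-- A morphism `f : X ⟶ Y` is an effective descent morphism if the pullback functor
`f* : C/Y ⥤ C/X` is monadic. -/
def EffectiveDescentMorphism {X Y : C} (f : X ⟶ Y) : Prop :=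
  Nonempty (MonadicRightAdjoint (Over.pullback f))

/-- A principal `G`-bundle: a `G`-object `(P, p)` such that `! : P ⟶ 1` is an effective
descent morphism and `(p, π₂) : G ⨯ P ⟶ P ⨯ P` is an isomorphism. -/
def IsPrincipal (Gr : InternalGroup C) (P : InternalGroup.GObject Gr) : Prop :=
  EffectiveDescentMorphism (terminal.from P.A) ∧
    IsIso (prod.lift (InternalGroup.act P) prod.snd)

/-- The functor `C ⥤ C/P` sending `X` to the projection `P ⨯ X ⟶ P`. -/
def projFunctor (P : C) : C ⥤ Over P where
  obj X := Over.mk (prod.fst : P ⨯ X ⟶ P)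
  map {X Y} f := Over.homMk (prod.map (𝟙 P) f) (by simp)
  map_id X := by ext; dsimp; simp
  map_comp f g := by ext; dsimp; simp

theorem cofork_condition (Gr : InternalGroup C) (P : InternalGroup.GObject Gr) (X : C) :
    ((prod.associator Gr.G P.A X).inv ≫ prod.map (InternalGroup.act P) (𝟙 X)) ≫
        (prod.snd : P.A ⨯ X ⟶ X)
      = (prod.snd : Gr.G ⨯ (P.A ⨯ X) ⟶ P.A ⨯ X) ≫ prod.snd := by
  simp

/-- The object `G ⨯ X` of `C/X` underlying the internal group induced by `G` in `C/X`. -/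
def overG (Gr : InternalGroup C) (X : C) : Over X := Over.mk (prod.snd : Gr.G ⨯ X ⟶ X)

section OverGroup

variable {Gr : InternalGroup C} {X : C}

/-- The `G`-component of a morphism into `G ⨯ X` over `X`. -/
abbrev toG {A : Over X} (u : A ⟶ overG Gr X) : A.left ⟶ Gr.G := u.left ≫ prod.fst

theorem homGX_ext {A : Over X} {u v : A ⟶ overG Gr X} (h : toG u = toG v) : u = v := by
  ext
  apply Limits.prod.hom_ext
  · exact h
  · have hu := Over.w u
    have hv := Over.w v
    dsimp [overG] at hu hv
    rw [hu, hv]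

theorem toG_comp {A B : Over X} (w : A ⟶ B) (u : B ⟶ overG Gr X) :
    toG (w ≫ u) = w.left ≫ toG u := by
  dsimp [toG]
  exact Category.assoc _ _ _

variable (Gr X)

/-- The multiplication `m ⨯ id_X : (G ⨯ G) ⨯ X ⟶ G ⨯ X` of the induced group in `C/X`,
viewing `(G ⨯ X) ⨯_X (G ⨯ X) ≅ (G ⨯ G) ⨯ X`. -/
def overMul : overG Gr X ⨯ overG Gr X ⟶ overG Gr X :=
  Over.homMk
    (prod.lift
      (prod.lift (toG (prod.fst : overG Gr X ⨯ overG Gr X ⟶ overG Gr X))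
        (toG (prod.snd : overG Gr X ⨯ overG Gr X ⟶ overG Gr X)) ≫ Gr.m)
      (overG Gr X ⨯ overG Gr X).hom)
    (by simp [overG])

/-- The unit `(e ∘ !, id_X) : X ⟶ G ⨯ X` of the induced group in `C/X`. -/
def overOne : ⊤_ (Over X) ⟶ overG Gr X :=
  Over.homMk (prod.lift (terminal.from (⊤_ Over X).left ≫ Gr.e) (⊤_ Over X).hom)
    (by simp [overG])

/-- The inverse `i ⨯ id_X : G ⨯ X ⟶ G ⨯ X` of the induced group in `C/X`. -/
def overInv : overG Gr X ⟶ overG Gr X :=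
  Over.homMk (prod.map Gr.i (𝟙 X)) (by simp [overG])

variable {Gr X}

theorem toG_overMul {A : Over X} (u : A ⟶ overG Gr X ⨯ overG Gr X) :
    toG (u ≫ overMul Gr X)
      = prod.lift (toG (u ≫ prod.fst)) (toG (u ≫ prod.snd)) ≫ Gr.m := by
  rw [toG_comp]
  dsimp [overMul, toG]
  erw [prod.lift_fst, prod.comp_lift_assoc]
  congr 2 <;> exact (Category.assoc _ _ _).symm

theorem toG_overOne {A : Over X} (u : A ⟶ ⊤_ (Over X)) :
    toG (u ≫ overOne Gr X) = terminal.from A.left ≫ Gr.e := by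
  rw [toG_comp]
  dsimp [overOne, toG]
  erw [prod.lift_fst, ← Category.assoc, terminal.comp_from]

end OverGroup

/-- The internal group `G ⨯ X` in the slice category `C/X` induced by an internal group `G`
of `C`: its multiplication is induced by `m ⨯ id_X`, its unit by `(e ∘ !, id_X)` and its
inverse by `i ⨯ id_X`. -/
def inducedGroup (Gr : InternalGroup C) (X : C) : InternalGroup (Over X) where
  G := overG Gr X
  m := overMul Gr X
  e := overOne Gr X
  i := overInv Gr X
  one_mul' := by
    apply homGX_ext
    rw [toG_overMul, prod.lift_fst, prod.lift_snd, toG_overOne]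
    simp only [toG, Over.id_left, Category.id_comp]
    erw [Category.id_comp]
    exact Gr.one_mul_elt (prod.fst : Gr.G ⨯ X ⟶ Gr.G)
  mul_one' := by
    apply homGX_ext
    rw [toG_overMul, prod.lift_fst, prod.lift_snd, toG_overOne]
    simp only [toG, Over.id_left, Category.id_comp]
    erw [Category.id_comp]
    exact Gr.mul_one_elt (prod.fst : Gr.G ⨯ X ⟶ Gr.G)
  mul_assoc' := by
    apply homGX_ext
    have l1 : ((prod.associator (overG Gr X) (overG Gr X) (overG Gr X)).inv ≫
          prod.map (overMul Gr X) (𝟙 (overG Gr X))) ≫ prod.fst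
        = prod.lift prod.fst (prod.snd ≫ prod.fst) ≫ overMul Gr X := by
      rw [Category.assoc, prod.map_fst, ← Category.assoc]
      congr 1
      simp
    have l2 : ((prod.associator (overG Gr X) (overG Gr X) (overG Gr X)).inv ≫
          prod.map (overMul Gr X) (𝟙 (overG Gr X))) ≫ prod.snd
        = prod.snd ≫ prod.snd := by
      rw [Category.assoc, prod.map_snd, Category.comp_id]
      simp
    have l3 : prod.map (𝟙 (overG Gr X)) (overMul Gr X) ≫
          (prod.fst : overG Gr X ⨯ overG Gr X ⟶ overG Gr X) = prod.fst := by
      rw [prod.map_fst, Category.comp_id]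
    have l4 : prod.map (𝟙 (overG Gr X)) (overMul Gr X) ≫
          (prod.snd : overG Gr X ⨯ overG Gr X ⟶ overG Gr X)
        = prod.snd ≫ overMul Gr X := by
      rw [prod.map_snd]
    rw [← Category.assoc, toG_overMul, l1, l2, toG_overMul, prod.lift_fst, prod.lift_snd]
    rw [toG_overMul, l3, l4, toG_overMul]
    exact Gr.mul_assoc_elt _ _ _
  inv_mul' := by
    apply homGX_ext
    rw [toG_overMul, prod.lift_fst, prod.lift_snd, toG_overOne]
    have hi : toG (overInv Gr X) = prod.fst ≫ Gr.i := by
      dsimp [overInv, toG]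
      erw [prod.map_fst]
    rw [hi]
    simp only [toG, Over.id_left, Category.id_comp]
    erw [Category.id_comp]
    exact Gr.inv_mul_elt (prod.fst : Gr.G ⨯ X ⟶ Gr.G)
  mul_inv' := by
    apply homGX_ext
    rw [toG_overMul, prod.lift_fst, prod.lift_snd, toG_overOne]
    have hi : toG (overInv Gr X) = prod.fst ≫ Gr.i := by
      dsimp [overInv, toG]
      erw [prod.map_fst]
    rw [hi]
    simp only [toG, Over.id_left, Category.id_comp]
    erw [Category.id_comp]
    exact Gr.mul_inv_elt (prod.fst : Gr.G ⨯ X ⟶ Gr.G)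

/-- A principal `G`-bundle over an object `X` of `C`: a `G`-object `(P, p)` with an
action-invariant morphism `f : P ⟶ X` which is an effective descent morphism and such that
`(p, π₂) : G ⨯ P ⟶ P ⨯_X P` is an isomorphism. -/
structure PrincipalBundleOver (Gr : InternalGroup C) (X : C) where
  P : InternalGroup.GObject Gr
  f : P.A ⟶ X
  invariant : InternalGroup.act P ≫ f = prod.snd ≫ f
  descent : EffectiveDescentMorphism f
  torsor : IsIso (pullback.lift (InternalGroup.act P) prod.snd invariant)

namespace PrincipalBundleOver

variable {Gr : InternalGroup C} {X : C}

/-- A morphism of principal `G`-bundles over `X`: a `G`-homomorphism over `X`. -/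
@[ext]
structure Hom (P Q : PrincipalBundleOver Gr X) where
  hom : P.P ⟶ Q.P
  w : hom.f ≫ Q.f = P.f

/-- The category of principal `G`-bundles over `X`. -/
instance : Category (PrincipalBundleOver Gr X) where
  Hom P Q := Hom P Q
  id P := ⟨𝟙 P.P, by rw [Monad.Algebra.id_f]; simp⟩
  comp u v := ⟨u.hom ≫ v.hom, by rw [Monad.Algebra.comp_f, Category.assoc, v.w, u.w]⟩
  id_comp u := by apply Hom.ext; simp
  comp_id u := by apply Hom.ext; simp
  assoc u v w := by apply Hom.ext; simp

end PrincipalBundleOver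

/-- The category of adjunctions `L ⊣ R : C ⇄ [G, C]` over `C` (i.e. `Σ_G ∘ L ≅ Id_C`)
satisfying Frobenius reciprocity; morphisms are natural transformations between the left
adjoints. -/
structure FrobAdjObj (Gr : InternalGroup C) (SG : InternalGroup.GObject Gr ⥤ C) where
  L : C ⥤ InternalGroup.GObject Gr
  R : InternalGroup.GObject Gr ⥤ C
  adj : L ⊣ R
  isOver : Nonempty (L ⋙ SG ≅ 𝟭 C)
  frob : IsFrobenius adj

/-- A morphism of adjunctions over `C`: a natural transformation between the left adjoints. -/
@[ext]
structure FrobAdjHom {Gr : InternalGroup C} {SG : InternalGroup.GObject Gr ⥤ C}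
    (A B : FrobAdjObj Gr SG) where
  nat : A.L ⟶ B.L

instance (Gr : InternalGroup C) (SG : InternalGroup.GObject Gr ⥤ C) :
    Category (FrobAdjObj Gr SG) where
  Hom A B := FrobAdjHom A B
  id A := ⟨𝟙 A.L⟩
  comp u v := ⟨u.nat ≫ v.nat⟩
  id_comp u := by apply FrobAdjHom.ext; simp
  comp_id u := by apply FrobAdjHom.ext; simp
  assoc u v w := by apply FrobAdjHom.ext; simp

/-- The category of adjunctions `L ⊣ R : C/X ⇄ [G, C]` over `C` (i.e. `Σ_G ∘ L ≅ Σ_X`)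
that are stably Frobenius; morphisms are natural transformations between the left adjoints. -/
structure StablyFrobAdjOver (Gr : InternalGroup C) (SG : InternalGroup.GObject Gr ⥤ C)
    (X : C) where
  L : Over X ⥤ InternalGroup.GObject Gr
  R : InternalGroup.GObject Gr ⥤ Over X
  adj : L ⊣ R
  isOver : Nonempty (L ⋙ SG ≅ Over.forget X)
  frob : IsStablyFrobenius adj

/-- A morphism of adjunctions over `C`: a natural transformation between the left adjoints. -/
@[ext]
structure StablyFrobAdjHom {Gr : InternalGroup C} {SG : InternalGroup.GObject Gr ⥤ C} {X : C}
    (A B : StablyFrobAdjOver Gr SG X) where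
  nat : A.L ⟶ B.L

instance (Gr : InternalGroup C) (SG : InternalGroup.GObject Gr ⥤ C) (X : C) :
    Category (StablyFrobAdjOver Gr SG X) where
  Hom A B := StablyFrobAdjHom A B
  id A := ⟨𝟙 A.L⟩
  comp u v := ⟨u.nat ≫ v.nat⟩
  id_comp u := by apply StablyFrobAdjHom.ext; simp
  comp_id u := by apply StablyFrobAdjHom.ext; simp
  assoc u v w := by apply StablyFrobAdjHom.ext; simp

end PrincipalBundles

open PrincipalBundles PrincipalBundles.InternalGroup
open CategoryTheory CategoryTheory.Limits

/-! The Frobenius map of `L'L ⊣ RR'` at `(W, X)` is `L'` applied to the Frobenius map of `L ⊣ R`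
at `(W, R'X)`, followed by the Frobenius map of `L' ⊣ R'` at `(LW, X)`; so it is invertible when
both are. For the stable version, the composite of the slices of the two adjunctions and the
slice of the composite have the same right adjoint. Frobenius reciprocity depends only on the
right adjoint, because two left adjoints of the same functor are isomorphic compatibly with the
counits, and this isomorphism conjugates one Frobenius map into the other. -/

section Frobenius

variable {D : Type u} [Category.{v} D] [HasFiniteLimits D]
  {C : Type u₂} [Category.{v₂} C] [HasFiniteLimits C]
  {B : Type u₃} [Category.{v₃} B] [HasFiniteLimits B]

theorem frobMap_comp {L : D ⥤ C} {R : C ⥤ D} (adj : L ⊣ R)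
    {L' : C ⥤ B} {R' : B ⥤ C} (adj' : L' ⊣ R') (W : D) (X : B) :
    frobMap (adj.comp adj') W X
      = L'.map (frobMap adj W (R'.obj X)) ≫ frobMap adj' (L.obj W) X := by
  dsimp [frobMap]
  ext
  · simp only [Category.assoc, prod.lift_fst, Adjunction.comp_counit_app,
      ← L'.map_comp_assoc]
  · simp only [Category.assoc, prod.lift_snd, ← L'.map_comp]

theorem IsFrobenius.comp {L : D ⥤ C} {R : C ⥤ D} {adj : L ⊣ R}
    {L' : C ⥤ B} {R' : B ⥤ C} {adj' : L' ⊣ R'}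
    (h : IsFrobenius adj) (h' : IsFrobenius adj') : IsFrobenius (adj.comp adj') := by
  intro W X
  have := h W (R'.obj X)
  have := h' (L.obj W) X
  rw [frobMap_comp]
  infer_instance

theorem frobMap_comp_prod_map_leftAdjointUniq {L₁ L₂ : D ⥤ C} {R : C ⥤ D}
    (adj₁ : L₁ ⊣ R) (adj₂ : L₂ ⊣ R) (W : D) (X : C) :
    frobMap adj₁ W X ≫ prod.map (𝟙 X) ((adj₁.leftAdjointUniq adj₂).hom.app W)
      = (adj₁.leftAdjointUniq adj₂).hom.app _ ≫ frobMap adj₂ W X := by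
  ext
  · simp only [frobMap, Category.assoc, prod.map_fst, Category.comp_id, prod.lift_fst]
    rw [← (adj₁.leftAdjointUniq adj₂).hom.naturality_assoc,
      Adjunction.leftAdjointUniq_hom_app_counit]
  · simp only [frobMap, Category.assoc, prod.map_snd, prod.lift_snd_assoc, prod.lift_snd,
      (adj₁.leftAdjointUniq adj₂).hom.naturality]

theorem IsFrobenius.of_sameRightAdjoint {L₁ L₂ : D ⥤ C} {R : C ⥤ D}
    {adj₁ : L₁ ⊣ R} (adj₂ : L₂ ⊣ R) (h : IsFrobenius adj₁) : IsFrobenius adj₂ := by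
  intro W X
  have := h W X
  have : IsIso ((adj₁.leftAdjointUniq adj₂).hom.app _ ≫ frobMap adj₂ W X) := by
    rw [← frobMap_comp_prod_map_leftAdjointUniq]
    infer_instance
  exact IsIso.of_isIso_comp_left ((adj₁.leftAdjointUniq adj₂).hom.app _) _

theorem IsStablyFrobenius.comp {L : D ⥤ C} {R : C ⥤ D} {adj : L ⊣ R}
    {L' : C ⥤ B} {R' : B ⥤ C} {adj' : L' ⊣ R'}
    (h : IsStablyFrobenius adj) (h' : IsStablyFrobenius adj') :
    IsStablyFrobenius (adj.comp adj') := by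
  intro X
  have := IsFrobenius.comp (h (R'.obj X)) (h' X)
  -- the right adjoint `slicedR adj' X ⋙ slicedR adj (R'.obj X)` of `this` is definitionally
  -- `slicedR (adj.comp adj') X`
  exact IsFrobenius.of_sameRightAdjoint (slicedAdj (adj.comp adj') X) this

end Frobenius

/-- Frobenius reciprocity and the stable Frobenius condition are preserved by
composition of adjunctions between cartesian categories. -/
theorem statement5 {D : Type u} [Category.{v} D] [HasFiniteLimits D]
    {C : Type u₂} [Category.{v₂} C] [HasFiniteLimits C]
    {B : Type u₃} [Category.{v₃} B] [HasFiniteLimits B]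
    {L : D ⥤ C} {R : C ⥤ D} (adj : L ⊣ R)
    {L' : C ⥤ B} {R' : B ⥤ C} (adj' : L' ⊣ R') :
    (IsFrobenius adj → IsFrobenius adj' → IsFrobenius (adj.comp adj')) ∧
    (IsStablyFrobenius adj → IsStablyFrobenius adj' → IsStablyFrobenius (adj.comp adj')) :=
  ⟨IsFrobenius.comp, IsStablyFrobenius.comp⟩
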